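/- arXiv:1910.00228 — 3 statements merged into one kernel-verified Lean document; each statement's English description precedes it below -/
import Mathlib

section
/- Let I ⊆ ℝ be an open interval and let f, g : ℝ → ℝ. Assume that f is differentiable at every point of I, that g is continuous on I, and that for every x ∈ I one has f(x) ≥ 0, g(x) ≥ 0 and f(x)·g(x) = 0. Then (deriv f x)·g(x) = 0 for every x ∈ I. -/
/-- If `f` is differentiable and `g` is continuous on an open interval `(a, b)`, both are
nonnegative there and their pointwise product vanishes, then `(deriv f) · g` vanishes on the
interval as well. -/
theorem deriv_mul_eq_zero_of_nonneg_mul_eq_zero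
    (a b : ℝ) (f g : ℝ → ℝ)
    (hf : ∀ x ∈ Set.Ioo a b, DifferentiableAt ℝ f x)
    (hg : ContinuousOn g (Set.Ioo a b))
    (hf0 : ∀ x ∈ Set.Ioo a b, 0 ≤ f x)
    (hg0 : ∀ x ∈ Set.Ioo a b, 0 ≤ g x)
    (hfg : ∀ x ∈ Set.Ioo a b, f x * g x = 0) :
    ∀ x ∈ Set.Ioo a b, deriv f x * g x = 0 := by
  intro x hx
  rcases eq_or_lt_of_le (hg0 x hx) with h0 | hpos
  · rw [← h0, mul_zero]
  · -- g is positive near x, so f = 0 near x, hence deriv f x = 0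
    have hIoo : Set.Ioo a b ∈ nhds x := (isOpen_Ioo).mem_nhds hx
    have hcont : ContinuousAt g x := (hg x hx).continuousAt hIoo
    have hgpos : ∀ᶠ y in nhds x, 0 < g y := continuousAt_const.eventually_lt hcont hpos
    have hf0' : ∀ᶠ y in nhds x, f y = 0 := by
      filter_upwards [hgpos, hIoo] with y hy hyI
      have := hfg y hyI
      rcases mul_eq_zero.mp this with h | h
      · exact h
      · exact absurd h (ne_of_gt hy)
    have : deriv f x = deriv (fun _ : ℝ => (0 : ℝ)) x :=
      Filter.EventuallyEq.deriv_eq hf0'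
    rw [this, deriv_const, zero_mul]
end

section
/- Let ρ > 0, let D⁺ = {z ∈ ℂ : |z| < ρ and Im z > 0} be the open upper half-disk and let I = {x ∈ ℝ : |x| < ρ}, regarded as a subset of ℂ. Let y : ℂ → ℝ be differentiable at every point of D⁺, let ȳ : ℂ → ℝ be continuous on D⁺ ∪ I with ȳ = y on D⁺, and let p₁, p₂ : ℂ → ℝ be continuous on D⁺ ∪ I with p₁(z) = ∂₁y(z) and p₂(z) = ∂₂y(z) for all z ∈ D⁺. Assume the Signorini conditions on I: for every x ∈ I, ȳ(x) ≥ 0, −p₂(x) ≥ 0 (the outward normal derivative of the upper half-plane is −∂₂), and ȳ(x)·p₂(x) = 0. Then the tangential derivative times the normal derivative vanishes on the Signorini boundary: p₁(x)·p₂(x) = 0 for every x ∈ I. -/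
/-!
Near a boundary point `x` with `p₂ x ≠ 0`, continuity keeps `p₂` nonzero on the diameter, so the
complementarity condition `ȳ p₂ = 0` forces `ȳ = 0` on a neighbourhood of `x` in the diameter.
On the other hand the trace `t ↦ ȳ t` on the diameter is differentiable with derivative `p₁`: it
is the pointwise limit, as `ε → 0⁺`, of the horizontal slices `t ↦ y (t + ε i)`, whose derivatives
`p₁ (t + ε i)` converge locally uniformly by continuity of `p₁` up to the boundary. Hence
`p₁ x = 0`.
-/

open Complex Filter Topology Set Metric

lemma tendsto_ofReal_add_mul_I_nhdsWithin {U : Set ℂ} (hU : IsOpen U) {a : ℝ}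
    (ha : (a : ℂ) ∈ U) :
    Tendsto (fun q : ℝ × ℝ => (q.2 : ℂ) + q.1 * I) (𝓝[>] 0 ×ˢ 𝓝 a)
      (𝓝[U ∩ {z | 0 < z.im}] a) := by
  have hcont : Tendsto (fun q : ℝ × ℝ => (q.2 : ℂ) + q.1 * I) (𝓝[>] 0 ×ˢ 𝓝 a) (𝓝 a) := by
    have hle : 𝓝[>] (0 : ℝ) ×ˢ 𝓝 a ≤ 𝓝 ((0 : ℝ), a) := by
      rw [nhds_prod_eq]; exact Filter.prod_mono_left _ nhdsWithin_le_nhds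
    have : Continuous (fun q : ℝ × ℝ => (q.2 : ℂ) + q.1 * I) := by fun_prop
    simpa using (this.tendsto (0, a)).mono_left hle
  refine tendsto_nhdsWithin_of_tendsto_nhds_of_eventually_within _ hcont ?_
  filter_upwards [hcont (hU.mem_nhds ha), prod_mem_prod self_mem_nhdsWithin univ_mem]
    with q hqU hq
  exact ⟨hqU, by simpa using hq.1⟩

lemma ContinuousOn.continuousAt_comp_ofReal {X : Type*} [TopologicalSpace X] {U : Set ℂ}
    (hU : IsOpen U) {f : ℂ → X} (hf : ContinuousOn f (U ∩ {z | 0 ≤ z.im})) {a : ℝ}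
    (ha : (a : ℂ) ∈ U) : ContinuousAt (fun t : ℝ => f t) a := by
  rw [← continuousWithinAt_univ]
  refine (hf a ⟨ha, by simp⟩).comp_of_preimage_mem_nhdsWithin
    continuous_ofReal.continuousWithinAt ?_
  rw [nhdsWithin_univ]
  filter_upwards [continuous_ofReal.continuousAt.preimage_mem_nhds (hU.mem_nhds ha)]
    with t ht using ⟨ht, by simp⟩

theorem hasDerivAt_ofReal_of_continuousOn_fderiv_one {F : Type*} [NormedAddCommGroup F]
    [NormedSpace ℝ F] {U : Set ℂ} (hU : IsOpen U) {y ybar p : ℂ → F}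
    (hy : ∀ z ∈ U ∩ {z | 0 < z.im}, DifferentiableAt ℝ y z)
    (hybar : ContinuousOn ybar (U ∩ {z | 0 ≤ z.im}))
    (hybar_eq : EqOn ybar y (U ∩ {z | 0 < z.im}))
    (hp : ContinuousOn p (U ∩ {z | 0 ≤ z.im}))
    (hp_eq : ∀ z ∈ U ∩ {z | 0 < z.im}, p z = fderiv ℝ y z 1)
    {a : ℝ} (ha : (a : ℂ) ∈ U) :
    HasDerivAt (fun t : ℝ => ybar t) (p a) a := by
  have hsub : U ∩ {z | 0 < z.im} ⊆ U ∩ {z | 0 ≤ z.im} :=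
    inter_subset_inter_right U fun z (hz : 0 < z.im) => hz.le
  have hslices := tendsto_ofReal_add_mul_I_nhdsWithin hU ha
  apply hasDerivAt_of_tendstoUniformlyOnFilter (l := 𝓝[>] 0)
    (f := fun (ε t : ℝ) => y (t + ε * I)) (f' := fun (ε t : ℝ) => p (t + ε * I))
    (g' := fun t : ℝ => p t)
  · rw [tendstoUniformlyOnFilter_iff_tendsto]
    refine Tendsto.mono_right (Tendsto.prodMk_nhds ?_ ?_) (nhds_le_uniformity (p a))
    · exact (hp.continuousAt_comp_ofReal hU ha).tendsto.comp tendsto_snd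
    · exact (hp a ⟨ha, by simp⟩).tendsto.comp (hslices.mono_right (nhdsWithin_mono _ hsub))
  · filter_upwards [hslices self_mem_nhdsWithin] with q hq
    have hpath : HasDerivAt (fun t : ℝ => (t : ℂ) + q.1 * I) 1 q.2 := by
      simpa using (hasDerivAt_id q.2).ofReal_comp.add_const (q.1 * I : ℂ)
    rw [hp_eq _ hq]
    exact (hy _ hq).hasFDerivAt.comp_hasDerivAt q.2 hpath
  · filter_upwards [continuous_ofReal.continuousAt.preimage_mem_nhds (hU.mem_nhds ha)]
      with t ht
    have hvert : Tendsto (fun ε : ℝ => (t : ℂ) + ε * I) (𝓝[>] 0) (𝓝[U ∩ {z | 0 < z.im}] t) :=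
      (tendsto_ofReal_add_mul_I_nhdsWithin hU ht).comp (tendsto_id.prodMk tendsto_const_nhds)
    refine ((hybar t ⟨ht, by simp⟩).tendsto.comp
      (hvert.mono_right (nhdsWithin_mono _ hsub))).congr' ?_
    filter_upwards [hvert self_mem_nhdsWithin] with ε hε using hybar_eq hε

lemma setOf_norm_lt_and_im_pos (ρ : ℝ) :
    {z : ℂ | ‖z‖ < ρ ∧ 0 < z.im} = ball 0 ρ ∩ {z | 0 < z.im} := by
  ext z; simp

lemma setOf_norm_lt_and_im_pos_union (ρ : ℝ) :
    {z : ℂ | ‖z‖ < ρ ∧ 0 < z.im} ∪ {z : ℂ | z.im = 0 ∧ |z.re| < ρ} =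
      ball 0 ρ ∩ {z | 0 ≤ z.im} := by
  ext z
  rcases lt_trichotomy z.im 0 with h | h | h
  · simp [h.ne, h.not_gt, h.not_ge]
  · have hnorm : ‖z‖ = |z.re| := by rw [← re_add_im z, h]; simp
    simp [h, hnorm]
  · simp [h, h.ne', h.le]

theorem tangential_mul_normal_eq_zero_on_signorini_boundary_general
    (ρ : ℝ)
    (D : Set ℂ) (hD : D = {z : ℂ | ‖z‖ < ρ ∧ 0 < z.im})
    (I : Set ℂ) (hI : I = {z : ℂ | z.im = 0 ∧ |z.re| < ρ})
    (y ybar p₁ p₂ : ℂ → ℝ)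
    (hy : ∀ z ∈ D, DifferentiableAt ℝ y z)
    (hybar : ContinuousOn ybar (D ∪ I))
    (hybar_eq : ∀ z ∈ D, ybar z = y z)
    (hp₁ : ContinuousOn p₁ (D ∪ I))
    (hp₂ : ContinuousOn p₂ (D ∪ I))
    (hp₁_eq : ∀ z ∈ D, p₁ z = fderiv ℝ y z 1)
    (hsig : ∀ z ∈ I, 0 ≤ ybar z ∧ 0 ≤ -p₂ z ∧ ybar z * p₂ z = 0) :
    ∀ z ∈ I, p₁ z * p₂ z = 0 := by
  subst hD hI
  rintro z ⟨hz_im, hz_re⟩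
  obtain ⟨a, rfl⟩ : ∃ a : ℝ, (a : ℂ) = z := ⟨z.re, Complex.ext (by simp) (by simp [hz_im])⟩
  rw [setOf_norm_lt_and_im_pos] at hy hybar_eq hp₁_eq
  rw [setOf_norm_lt_and_im_pos_union] at hybar hp₁ hp₂
  have ha : (a : ℂ) ∈ ball 0 ρ := by simpa using hz_re
  have htrace := hasDerivAt_ofReal_of_continuousOn_fderiv_one isOpen_ball hy hybar hybar_eq
    hp₁ hp₁_eq ha
  rcases eq_or_ne (p₂ a) 0 with h | h
  · simp [h]
  have hzero : (fun t : ℝ => ybar t) =ᶠ[𝓝 a] fun _ => 0 := by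
    filter_upwards [(isOpen_lt continuous_abs continuous_const).mem_nhds (by simpa using hz_re),
      (hp₂.continuousAt_comp_ofReal isOpen_ball ha).eventually_ne h] with t ht hne
    exact (mul_eq_zero.1 (hsig t ⟨by simp, by simpa using ht⟩).2.2).resolve_right hne
  simp [htrace.unique ((hasDerivAt_const a 0).congr_of_eventuallyEq hzero)]

/-- Lemma 2.2 of the paper for a flat piece of the Signorini boundary: if `y` is differentiable
on the open upper half-disk `D⁺`, `ȳ, p₁, p₂` are continuous extensions of `y, ∂₁y, ∂₂y` to
`D⁺ ∪ I` (where `I` is the open diameter), and the Signorini conditions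
`ȳ ≥ 0`, `−p₂ ≥ 0`, `ȳ·p₂ = 0` hold on `I`, then `p₁·p₂ = 0` on `I`. -/
theorem tangential_mul_normal_eq_zero_on_signorini_boundary
    (ρ : ℝ) (hρ : 0 < ρ)
    (D : Set ℂ) (hD : D = {z : ℂ | ‖z‖ < ρ ∧ 0 < z.im})
    (I : Set ℂ) (hI : I = {z : ℂ | z.im = 0 ∧ |z.re| < ρ})
    (y ybar p₁ p₂ : ℂ → ℝ)
    (hy : ∀ z ∈ D, DifferentiableAt ℝ y z)
    (hybar : ContinuousOn ybar (D ∪ I))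
    (hybar_eq : ∀ z ∈ D, ybar z = y z)
    (hp₁ : ContinuousOn p₁ (D ∪ I))
    (hp₂ : ContinuousOn p₂ (D ∪ I))
    (hp₁_eq : ∀ z ∈ D, p₁ z = fderiv ℝ y z 1)
    (hp₂_eq : ∀ z ∈ D, p₂ z = fderiv ℝ y z Complex.I)
    (hsig : ∀ z ∈ I, 0 ≤ ybar z ∧ 0 ≤ -p₂ z ∧ ybar z * p₂ z = 0) :
    ∀ z ∈ I, p₁ z * p₂ z = 0 :=
  tangential_mul_normal_eq_zero_on_signorini_boundary_general ρ D hD I hI y ybar p₁ p₂ hy hybar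
    hybar_eq hp₁ hp₂ hp₁_eq hsig
end

section
/- Let ρ > 0 and let F : ℂ → ℂ be holomorphic on the punctured disk U = {z ∈ ℂ : 0 < |z| < ρ} and integrable on U with respect to the Lebesgue (volume) measure on ℂ ≅ ℝ². Then there exists a function Φ : ℂ → ℂ holomorphic on the full disk {z ∈ ℂ : |z| < ρ} such that Φ(z) = z·F(z) for every z ∈ U. Equivalently, the Laurent expansion of F at 0 has the form F(z) = c/z + F_H(z) with c ∈ ℂ and F_H holomorphic on the disk. -/
/-!
By the mean value property on circles, integrated in polar coordinates, `‖F z‖` is at most the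
average of `‖F‖` over the disk `B(z, |z|)`, which lies in the punctured disk and in `B(0, 2|z|)`.
Hence `π |z|² ‖F z‖ ≤ ∫_{U ∩ B(0, 2|z|)} ‖F‖`, which tends to `0` with `z` by integrability, so
`z² F(z) → 0`. Thus `z F(z) = o(1/z)`, and Riemann's removable singularity theorem applies to
`z F(z)`.
-/

open MeasureTheory Set Filter Metric Real

open scoped Topology ENNReal

theorem lintegral_eq_lintegral_circleMap {g : ℂ → ℝ≥0∞} (hg : Measurable g) (c : ℂ) :
    ∫⁻ w, g w =
      ∫⁻ r in Ioi 0, ENNReal.ofReal r * ∫⁻ θ in Ioo (-π) π, g (circleMap c r θ) := by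
  have hpolar (p : ℝ × ℝ) : c + Complex.polarCoord.symm p = circleMap c p.1 p.2 := by
    simp [circleMap, Complex.exp_mul_I]
  have hmeas : Measurable fun p : ℝ × ℝ ↦ ENNReal.ofReal p.1 * g (circleMap c p.1 p.2) := by
    have : Continuous fun p : ℝ × ℝ ↦ circleMap c p.1 p.2 := by unfold circleMap; fun_prop
    exact (ENNReal.measurable_ofReal.comp measurable_fst).mul (hg.comp this.measurable)
  calc ∫⁻ w, g w = ∫⁻ w, g (c + w) := (lintegral_add_left_eq_self g c).symm
    _ = ∫⁻ p in Ioi 0 ×ˢ Ioo (-π) π, ENNReal.ofReal p.1 * g (circleMap c p.1 p.2) := by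
      rw [← Complex.lintegral_comp_polarCoord_symm, polarCoord_target]
      simp only [hpolar, smul_eq_mul]
    _ = _ := by
      rw [Measure.volume_eq_prod, setLIntegral_prod _ hmeas.aemeasurable]
      simp_rw [lintegral_const_mul' _ _ ENNReal.ofReal_ne_top]

theorem ball_dist_subset_ball_two_mul_diff_singleton {X : Type*} [PseudoMetricSpace X]
    (x y : X) : ball x (dist x y) ⊆ ball y (2 * dist x y) \ {y} := by
  intro w hw
  refine ⟨?_, fun hwy ↦ ?_⟩
  · rw [mem_ball] at hw ⊢
    linarith [dist_triangle w x y]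
  · rw [mem_singleton_iff.1 hwy, mem_ball, dist_comm] at hw
    exact lt_irrefl _ hw

theorem tendsto_setLIntegral_ball_inter_zero {f : ℂ → ℝ≥0∞} {s : Set ℂ}
    (hf : ∫⁻ w in s, f w ≠ ∞) (c : ℂ) :
    Tendsto (fun r ↦ ∫⁻ w in ball c r ∩ s, f w) (𝓝 0) (𝓝 0) := by
  have hvol : Tendsto (fun r : ℝ ↦ volume (ball c r)) (𝓝 0) (𝓝 0) := by
    have hsq := ENNReal.Tendsto.pow (ENNReal.continuous_ofReal.tendsto 0) (n := 2)
    simpa using ENNReal.Tendsto.mul_const hsq (Or.inr ENNReal.coe_ne_top) (b := NNReal.pi)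
  simp_rw [← Measure.restrict_restrict measurableSet_ball]
  exact tendsto_setLIntegral_zero hf (tendsto_of_tendsto_of_tendsto_of_le_of_le
    tendsto_const_nhds hvol (fun _ ↦ zero_le) fun r ↦ Measure.restrict_apply_le _ _)

section

variable {E : Type*} [NormedAddCommGroup E] [NormedSpace ℂ E] [CompleteSpace E]

theorem ofReal_two_pi_mul_enorm_le_setLIntegral_circleMap {f : ℂ → E} {c : ℂ} {r : ℝ}
    (hf : DiffContOnCl ℂ f (ball c |r|)) :
    ENNReal.ofReal (2 * π) * ‖f c‖ₑ ≤ ∫⁻ θ in Ioo (-π) π, ‖f (circleMap c r θ)‖ₑ := by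
  have hmean : f c = (2 * π)⁻¹ • ∫ θ in Ioo (-π) π, f (circleMap c r θ) := by
    rw [← integral_Ioc_eq_integral_Ioo, ← intervalIntegral.integral_of_le (by linarith [pi_pos]),
      ← hf.circleAverage, circleAverage_eq_integral_add (-π),
      intervalIntegral.integral_comp_add_right (fun θ ↦ f (circleMap c r θ))]
    ring_nf
  calc ENNReal.ofReal (2 * π) * ‖f c‖ₑ = ‖∫ θ in Ioo (-π) π, f (circleMap c r θ)‖ₑ := by
        rw [hmean, enorm_smul, ← mul_assoc, enorm_inv (by positivity),
          Real.enorm_of_nonneg (by positivity),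
          ENNReal.mul_inv_cancel (by simp [pi_pos]) ENNReal.ofReal_ne_top, one_mul]
    _ ≤ _ := enorm_integral_le_lintegral_enorm _

theorem volume_ball_mul_enorm_le_setLIntegral_ball {f : ℂ → E} {c : ℂ} {R : ℝ}
    (hf : DifferentiableOn ℂ f (ball c R)) :
    volume (ball c R) * ‖f c‖ₑ ≤ ∫⁻ w in ball c R, ‖f w‖ₑ := by
  classical
  have hmeas : Measurable ((ball c R).indicator fun w ↦ ‖f w‖ₑ) :=
    hf.continuousOn.enorm.measurable_piecewise continuousOn_const measurableSet_ball
  have hcircle {r : ℝ} (hr : 0 < r) (θ : ℝ) : circleMap c r θ ∈ ball c R ↔ r < R := by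
    rw [mem_ball, dist_eq_norm, circleMap_sub_center, norm_circleMap_zero, abs_of_pos hr]
  calc volume (ball c R) * ‖f c‖ₑ = ∫⁻ w, (ball c R).indicator (fun _ ↦ ‖f c‖ₑ) w := by
        rw [lintegral_indicator_const measurableSet_ball, mul_comm]
    _ = ∫⁻ r in Ioi 0, ENNReal.ofReal r *
          ∫⁻ θ in Ioo (-π) π, (ball c R).indicator (fun _ ↦ ‖f c‖ₑ) (circleMap c r θ) :=
        lintegral_eq_lintegral_circleMap (measurable_const.indicator measurableSet_ball) c
    _ ≤ ∫⁻ r in Ioi 0, ENNReal.ofReal r *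
          ∫⁻ θ in Ioo (-π) π, (ball c R).indicator (fun w ↦ ‖f w‖ₑ) (circleMap c r θ) := by
        refine setLIntegral_mono' measurableSet_Ioi fun r (hr : 0 < r) ↦ mul_right_mono ?_
        by_cases hrR : r < R
        · simp only [indicator_of_mem ((hcircle hr _).2 hrR), setLIntegral_const, volume_Ioo]
          rw [sub_neg_eq_add, ← two_mul, mul_comm]
          refine ofReal_two_pi_mul_enorm_le_setLIntegral_circleMap (hf.diffContOnCl_ball ?_)
          exact closedBall_subset_ball (by rwa [abs_of_pos hr])
        · simp [indicator_of_notMem (mt (hcircle hr _).1 hrR)]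
    _ = ∫⁻ w in ball c R, ‖f w‖ₑ := by
        rw [← lintegral_eq_lintegral_circleMap hmeas, lintegral_indicator measurableSet_ball]

theorem tendsto_sub_sq_smul_nhdsNE_of_integrableOn {F : ℂ → E} {c : ℂ} {s : Set ℂ}
    (hs : s ∈ 𝓝[≠] c) (hF : DifferentiableOn ℂ F s) (hFi : IntegrableOn F s) :
    Tendsto (fun z ↦ (z - c) ^ 2 • F z) (𝓝[≠] c) (𝓝 0) := by
  obtain ⟨δ, hδ, hδs⟩ := Metric.mem_nhdsWithin_iff.1 hs
  set G : ℝ → ℝ≥0∞ := fun r ↦ ∫⁻ w in ball c r ∩ s, ‖F w‖ₑ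
  have hG : Tendsto G (𝓝 0) (𝓝 0) := tendsto_setLIntegral_ball_inter_zero hFi.2.ne c
  have hbound : ∀ᶠ z in 𝓝[≠] c,
      ‖(z - c) ^ 2 • F z‖ₑ ≤ G (2 * dist z c) / NNReal.pi := by
    filter_upwards [nhdsWithin_le_nhds (ball_mem_nhds c (half_pos hδ))] with z hzδ
    have hsub : ball z (dist z c) ⊆ ball c (2 * dist z c) ∩ s := by
      have hzδ' : 2 * dist z c < δ := by rw [mem_ball] at hzδ; linarith
      intro w hw
      obtain ⟨hwc, hw_ne⟩ := ball_dist_subset_ball_two_mul_diff_singleton z c hw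
      exact ⟨hwc, hδs ⟨ball_subset_ball hzδ'.le hwc, hw_ne⟩⟩
    have hmean := volume_ball_mul_enorm_le_setLIntegral_ball
      (hF.mono (hsub.trans inter_subset_right))
    rw [ENNReal.le_div_iff_mul_le (Or.inl (by simp [NNReal.pi_ne_zero])) (Or.inl (by simp))]
    refine le_of_eq_of_le ?_ (hmean.trans (lintegral_mono_set hsub))
    rw [Complex.volume_ball, enorm_smul, enorm_pow, dist_eq_norm, ofReal_norm]
    ring
  rw [tendsto_zero_iff_enorm_tendsto_zero]
  refine tendsto_of_tendsto_of_tendsto_of_le_of_le' tendsto_const_nhds ?_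
    (.of_forall fun _ ↦ zero_le) hbound
  have hdist : Tendsto (fun z ↦ 2 * dist z c) (𝓝[≠] c) (𝓝 0) := by
    have hcont : Continuous fun z ↦ 2 * dist z c := by fun_prop
    simpa using (hcont.tendsto c).mono_left nhdsWithin_le_nhds
  simpa using ENNReal.Tendsto.div_const (hG.comp hdist) (Or.inr (by simp [NNReal.pi_ne_zero]))

theorem exists_differentiableOn_eqOn_sub_smul_of_tendsto {F : ℂ → E} {s : Set ℂ} {c : ℂ}
    (hs : s ∈ 𝓝 c) (hF : DifferentiableOn ℂ F (s \ {c}))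
    (hlim : Tendsto (fun z ↦ (z - c) ^ 2 • F z) (𝓝[≠] c) (𝓝 0)) :
    ∃ Φ : ℂ → E, DifferentiableOn ℂ Φ s ∧ EqOn Φ (fun z ↦ (z - c) • F z) (s \ {c}) := by
  set f : ℂ → E := fun z ↦ (z - c) • F z
  have ho : (fun z ↦ f z - f c) =o[𝓝[≠] c] fun z ↦ (z - c)⁻¹ := by
    have h := (Asymptotics.isBigO_refl (fun z ↦ (z - c)⁻¹) (𝓝[≠] c)).smul_isLittleO
      (Asymptotics.isLittleO_one_iff ℂ |>.2 hlim)
    refine h.congr' ?_ (.of_forall fun z ↦ by simp)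
    filter_upwards [self_mem_nhdsWithin] with z (hz : z ≠ c)
    simp [f, smul_smul, pow_two, ← mul_assoc, inv_mul_cancel₀ (sub_ne_zero.2 hz)]
  refine ⟨_, Complex.differentiableOn_update_limUnder_of_isLittleO hs
    ((differentiableOn_id.sub_const c).smul hF) ho, fun z hz ↦ ?_⟩
  exact Function.update_of_ne hz.2 _ _

end

/-- A function holomorphic on a punctured disk and integrable there (with respect to planar
Lebesgue measure) has at most a simple pole at the puncture: `z·F(z)` extends to a function
`Φ` holomorphic on the whole disk. -/
theorem holomorphic_extension_of_integrable_on_punctured_disk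
    (ρ : ℝ) (hρ : 0 < ρ)
    (U : Set ℂ) (hU : U = {z : ℂ | 0 < ‖z‖ ∧ ‖z‖ < ρ})
    (F : ℂ → ℂ)
    (hF : ∀ z ∈ U, DifferentiableAt ℂ F z)
    (hFi : IntegrableOn F U volume) :
    ∃ Φ : ℂ → ℂ, (∀ z ∈ Metric.ball (0 : ℂ) ρ, DifferentiableAt ℂ Φ z) ∧
      ∀ z ∈ U, Φ z = z * F z := by
  have hU' : U = ball 0 ρ \ {0} := by
    ext z
    simp [hU, and_comm]
  have hFU : DifferentiableOn ℂ F U := fun z hz ↦ (hF z hz).differentiableWithinAt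
  have hlim := tendsto_sub_sq_smul_nhdsNE_of_integrableOn
    (hU' ▸ sdiff_mem_nhdsWithin_compl (ball_mem_nhds 0 hρ) {0}) hFU hFi
  obtain ⟨Φ, hΦ, hΦF⟩ :=
    exists_differentiableOn_eqOn_sub_smul_of_tendsto (ball_mem_nhds 0 hρ) (hU' ▸ hFU) hlim
  refine ⟨Φ, fun z hz ↦ hΦ.differentiableAt (isOpen_ball.mem_nhds hz), fun z hz ↦ ?_⟩
  simpa using hΦF (hU' ▸ hz)
end
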